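/- Parrondo reversal for the two memory walks: with p_a = 0.5, p_b = 0.91, p_c = 0.26, the stationary drift of the memory register of channel A alone is 0, the stationary drift of the memory register of channel B alone (success probability 1−p_b in residue class 0 and 1−p_c otherwise, weighted by the stationary distribution) is strictly negative, yet the stationary drift of the mixed channel (success probabilities r_b = (1−p_a+1−p_b)/2 in class 0 and r_c = (1−p_a+1−p_c)/2 otherwise, weighted by the corresponding stationary distribution) is strictly positive. -/
import Mathlib


/-- A stationary distribution of the mod-3 chain with success probability
`s0` in residue class 0 and `s` in residue classes 1 and 2 (the chain moves
`+1 mod 3` on success and `-1 mod 3` on failure). -/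
def IsStationaryChain (s0 s : ℝ) (π : Fin 3 → ℝ) : Prop :=
  (∀ i, 0 ≤ π i) ∧ π 0 + π 1 + π 2 = 1 ∧
  s * π 2 + (1 - s) * π 1 = π 0 ∧
  s0 * π 0 + (1 - s) * π 2 = π 1 ∧
  s * π 1 + (1 - s0) * π 0 = π 2

/-- Parrondo reversal: with `pa = 0.5`, `pb = 0.91`,
`pc = 0.26`, the stationary drift of the memory of channel `A` alone is `0`,
that of channel `B` alone is strictly negative, yet that of the mixed channel
(success probabilities `rb`, `rc`) is strictly positive. -/
theorem stmt_5 (pa pb pc rb rc : ℝ)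
    (hpa : pa = 0.5) (hpb : pb = 0.91) (hpc : pc = 0.26)
    (hrb : rb = ((1 - pa) + (1 - pb)) / 2)
    (hrc : rc = ((1 - pa) + (1 - pc)) / 2)
    (πB πC : Fin 3 → ℝ)
    (hπB : IsStationaryChain (1 - pb) (1 - pc) πB)
    (hπC : IsStationaryChain rb rc πC) :
    2 * (1 - pa) - 1 = 0 ∧
    2 * ((1 - pb) * πB 0 + (1 - pc) * (1 - πB 0)) - 1 < 0 ∧
    2 * (rb * πC 0 + rc * (1 - πC 0)) - 1 > 0 := by
  subst hpa hpb hpc hrb hrc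
  obtain ⟨-, hB1, hB2, hB3, hB4⟩ := hπB
  obtain ⟨-, hC1, hC2, hC3, hC4⟩ := hπC
  refine ⟨by norm_num, ?_, ?_⟩
  · norm_num at hB1 hB2 hB3 hB4 ⊢
    linarith
  · norm_num at hC1 hC2 hC3 hC4 ⊢
    linarith
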